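/- arXiv:2605.08420 — 2 statements merged into one kernel-verified Lean document; each statement's English description precedes it below -/
import Mathlib

section
/- An s-stage Runge–Kutta method applied to a linear skew system ẋ = Ω x, with Ω skew-symmetric, whose coefficients satisfy the symplecticity conditions b_i a_{ij} + b_j a_{ji} − b_i b_j = 0 for all i, j, preserves the Euclidean norm of the state exactly: if x_{n+1} = x_n + h ∑_i b_i Ω Y_i with stages Y_i = x_n + h ∑_j a_{ij} Ω Y_j, then ‖x_{n+1}‖² = ‖x_n‖². -/
open Matrix

private lemma dotP_sum {n s : ℕ} (v : Fin n → ℝ) (f : Fin s → Fin n → ℝ) :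
    v ⬝ᵥ (∑ i, f i) = ∑ i, v ⬝ᵥ f i := by
  simp only [dotProduct, Finset.sum_apply, Finset.mul_sum]
  rw [Finset.sum_comm]

private lemma sum_dotP {n s : ℕ} (v : Fin n → ℝ) (f : Fin s → Fin n → ℝ) :
    (∑ i, f i) ⬝ᵥ v = ∑ i, f i ⬝ᵥ v := by
  simp only [dotProduct, Finset.sum_apply, Finset.sum_mul]
  rw [Finset.sum_comm]

theorem symplectic_rk_preserves_norm_linear_skew (s n : ℕ) (hs : 0 < s) (hn : 0 < n)
    (Ω : Matrix (Fin n) (Fin n) ℝ) (hskew : Ωᵀ = -Ω)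
    (h : ℝ) (A : Fin s → Fin s → ℝ) (b : Fin s → ℝ)
    (hsymp : ∀ i j, b i * A i j + b j * A j i = b i * b j)
    (xn : Fin n → ℝ) (Y : Fin s → (Fin n → ℝ))
    (hY : ∀ i, Y i = xn + h • ∑ j, A i j • Ω.mulVec (Y j))
    (xnext : Fin n → ℝ)
    (hx : xnext = xn + h • ∑ i, b i • Ω.mulVec (Y i)) :
    xnext ⬝ᵥ xnext = xn ⬝ᵥ xn := by
  set Z : Fin s → (Fin n → ℝ) := fun i => Ω.mulVec (Y i) with hZdef
  have skewlem : ∀ u v : Fin n → ℝ, u ⬝ᵥ Ω.mulVec v = -(v ⬝ᵥ Ω.mulVec u) := by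
    intro u v
    have h1 : u ᵥ* Ω = -(Ω *ᵥ u) := by
      rw [← mulVec_transpose, hskew, Matrix.neg_mulVec]
    rw [dotProduct_mulVec, h1, neg_dotProduct, dotProduct_comm]
  have hYZ : ∀ i, Y i ⬝ᵥ Z i = 0 := by
    intro i
    have := skewlem (Y i) (Y i)
    simp only [hZdef]
    linarith
  set S : ℝ := ∑ i, ∑ j, b i * A i j * (Z j ⬝ᵥ Z i) with hSdef
  have hxnZ : ∀ i, xn ⬝ᵥ Z i = -(h * ∑ j, A i j * (Z j ⬝ᵥ Z i)) := by
    intro i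
    have h1 : xn = Y i - h • ∑ j, A i j • Z j := by
      rw [hY i]; abel
    rw [h1, sub_dotProduct, smul_dotProduct, sum_dotP, hYZ]
    simp [smul_dotProduct, smul_eq_mul, Finset.mul_sum]
  set W : Fin n → ℝ := ∑ i, b i • Z i with hWdef
  have hxnW : xn ⬝ᵥ W = -(h * S) := by
    rw [hWdef, dotP_sum]
    simp only [dotProduct_smul, smul_eq_mul, hxnZ, hSdef, mul_neg]
    rw [Finset.sum_neg_distrib]
    congr 1
    simp only [Finset.mul_sum]
    refine Finset.sum_congr rfl fun i _ => ?_
    refine Finset.sum_congr rfl fun j _ => ?_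
    ring
  have hWW : W ⬝ᵥ W = 2 * S := by
    rw [hWdef, dotP_sum]
    simp only [sum_dotP, smul_dotProduct, dotProduct_smul, smul_eq_mul, Finset.mul_sum]
    calc (∑ i, ∑ j, b i * (b j * (Z j ⬝ᵥ Z i)))
        = (∑ i, ∑ j, b i * A i j * (Z j ⬝ᵥ Z i))
          + ∑ i, ∑ j, b j * A j i * (Z j ⬝ᵥ Z i) := by
          rw [← Finset.sum_add_distrib]
          refine Finset.sum_congr rfl fun i _ => ?_
          rw [← Finset.sum_add_distrib]
          refine Finset.sum_congr rfl fun j _ => ?_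
          linear_combination (-(Z j ⬝ᵥ Z i)) * hsymp i j
      _ = S + S := by
          congr 1
          rw [Finset.sum_comm]
          refine Finset.sum_congr rfl fun i _ => ?_
          refine Finset.sum_congr rfl fun j _ => ?_
          rw [dotProduct_comm]
      _ = 2 * S := by ring
  rw [hx]
  have hfin : (xn + h • W) ⬝ᵥ (xn + h • W)
      = xn ⬝ᵥ xn + h * (xn ⬝ᵥ W) + h * (W ⬝ᵥ xn) + h * h * (W ⬝ᵥ W) := by
    simp only [add_dotProduct, dotProduct_add, smul_dotProduct, dotProduct_smul, smul_eq_mul]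
    ring
  rw [hfin, dotProduct_comm W xn, hxnW, hWW]
  ring
end

section
/- A Runge–Kutta method with symplecticity conditions b_i a_{ij} + b_j a_{ji} = b_i b_j preserves every quadratic invariant of an autonomous system: if I(x) = xᵀ M x with M symmetric satisfies xᵀ M f(x) = 0 for all x, and stages Y_i = x_n + h ∑_j a_{ij} f(Y_j) with update x_{n+1} = x_n + h ∑_i b_i f(Y_i), then x_{n+1}ᵀ M x_{n+1} = x_nᵀ M x_n. -/
open Matrix
open LinearMap (BilinForm)

/-!
Write `g i = f (Y i)` and `B` for the symmetric form of `M`. Expanding the update gives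
`B x' x' = B x x + 2h ∑ b_i B(x, g_i) + h² ∑ b_i b_j B(g_i, g_j)`. Solving the stage equation for
`x` and using `B(Y_i, g_i) = 0` turns the cross term into `-h² ∑ (b_i a_ij + b_j a_ji) B(g_i, g_j)`,
which the symplecticity condition cancels against the quadratic term.
-/

theorem sum_sum_mul_mul_eq_two_mul_of_symplectic {R ι : Type*} [CommRing R] [Fintype ι]
    {b : ι → R} {A : ι → ι → R} (hsymp : ∀ i j, b i * A i j + b j * A j i = b i * b j)
    {c : ι → ι → R} (hc : ∀ i j, c i j = c j i) :
    ∑ i, ∑ j, b i * b j * c i j = 2 * ∑ i, ∑ j, b i * A i j * c i j := by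
  have hswap : ∑ i, ∑ j, b j * A j i * c i j = ∑ i, ∑ j, b i * A i j * c i j := by
    rw [Finset.sum_comm]
    simp only [hc]
  simp only [← hsymp, add_mul, Finset.sum_add_distrib, hswap]
  ring

namespace LinearMap.BilinForm

variable {R V ι : Type*} [CommRing R] [AddCommGroup V] [Module R V] [Fintype ι]

theorem IsSymm.apply_add_add_self {B : BilinForm R V} (hB : B.IsSymm) (x v : V) :
    B (x + v) (x + v) = B x x + 2 * B x v + B v v := by
  rw [map_add₂, map_add, map_add, hB.eq v x]
  ring

theorem apply_sum_smul_sum_smul (B : BilinForm R V) (b c : ι → R) (g : ι → V) :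
    B (∑ i, b i • g i) (∑ j, c j • g j) = ∑ i, ∑ j, b i * c j * B (g i) (g j) := by
  simp only [map_sum, map_smul, LinearMap.sum_apply, LinearMap.smul_apply, smul_eq_mul,
    Finset.mul_sum]
  rw [Finset.sum_comm]
  exact Finset.sum_congr rfl fun i _ => Finset.sum_congr rfl fun j _ => by ring

theorem apply_rk_stage {B : BilinForm R V} (hB : B.IsSymm) {f : V → V}
    (hf : ∀ y, B y (f y) = 0) {h : R} {A : ι → ι → R} {x : V} {Y : ι → V}
    (hY : ∀ i, Y i = x + h • ∑ j, A i j • f (Y j)) (i : ι) :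
    B x (f (Y i)) = -(h * ∑ j, A i j * B (f (Y i)) (f (Y j))) := by
  have hx : x = Y i - h • ∑ j, A i j • f (Y j) := by rw [hY i]; abel
  simp [hx, hf, map_sum, hB.eq (f _) (f (Y i))]

theorem IsSymm.apply_rk_step_self {B : BilinForm R V} (hB : B.IsSymm) {f : V → V}
    (hf : ∀ y, B y (f y) = 0) {h : R} {A : ι → ι → R} {b : ι → R}
    (hsymp : ∀ i j, b i * A i j + b j * A j i = b i * b j) {x : V} {Y : ι → V}
    (hY : ∀ i, Y i = x + h • ∑ j, A i j • f (Y j)) :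
    B (x + h • ∑ i, b i • f (Y i)) (x + h • ∑ i, b i • f (Y i)) = B x x := by
  set c : ι → ι → R := fun i j => B (f (Y i)) (f (Y j))
  have hc : ∀ i j, c i j = c j i := fun i j => hB.eq _ _
  have hcross : B x (∑ i, b i • f (Y i)) = -(h * ∑ i, ∑ j, b i * A i j * c i j) := by
    simp only [map_sum, map_smul, smul_eq_mul, apply_rk_stage hB hf hY, Finset.mul_sum,
      ← Finset.sum_neg_distrib]
    exact Finset.sum_congr rfl fun i _ => Finset.sum_congr rfl fun j _ => by ring
  have hquad : B (∑ i, b i • f (Y i)) (∑ i, b i • f (Y i)) = ∑ i, ∑ j, b i * b j * c i j :=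
    B.apply_sum_smul_sum_smul b b _
  rw [hB.apply_add_add_self, map_smul, map_smul₂, map_smul, hcross, hquad,
    sum_sum_mul_mul_eq_two_mul_of_symplectic hsymp hc]
  simp only [smul_eq_mul]
  ring

end LinearMap.BilinForm

theorem symplectic_rk_preserves_quadratic_invariant_general (s n : ℕ)
    (f : (Fin n → ℝ) → (Fin n → ℝ))
    (M : Matrix (Fin n) (Fin n) ℝ) (hM : Mᵀ = M)
    (horth : ∀ y : Fin n → ℝ, y ⬝ᵥ M.mulVec (f y) = 0)
    (h : ℝ) (A : Fin s → Fin s → ℝ) (b : Fin s → ℝ)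
    (hsymp : ∀ i j, b i * A i j + b j * A j i = b i * b j)
    (xn : Fin n → ℝ) (Y : Fin s → (Fin n → ℝ))
    (hY : ∀ i, Y i = xn + h • ∑ j, A i j • f (Y j))
    (xnext : Fin n → ℝ)
    (hx : xnext = xn + h • ∑ i, b i • f (Y i)) :
    xnext ⬝ᵥ M.mulVec xnext = xn ⬝ᵥ M.mulVec xn := by
  simp only [← Matrix.toBilin'_apply'] at horth ⊢
  rw [hx]
  exact (Matrix.isSymm_toBilin'_iff_isSymm.mpr hM).apply_rk_step_self horth hsymp hY

theorem symplectic_rk_preserves_quadratic_invariant (s n : ℕ) (hs : 0 < s) (hn : 0 < n)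
    (f : (Fin n → ℝ) → (Fin n → ℝ))
    (M : Matrix (Fin n) (Fin n) ℝ) (hM : Mᵀ = M)
    (horth : ∀ y : Fin n → ℝ, y ⬝ᵥ M.mulVec (f y) = 0)
    (h : ℝ) (A : Fin s → Fin s → ℝ) (b : Fin s → ℝ)
    (hsymp : ∀ i j, b i * A i j + b j * A j i = b i * b j)
    (xn : Fin n → ℝ) (Y : Fin s → (Fin n → ℝ))
    (hY : ∀ i, Y i = xn + h • ∑ j, A i j • f (Y j))
    (xnext : Fin n → ℝ)
    (hx : xnext = xn + h • ∑ i, b i • f (Y i)) :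
    xnext ⬝ᵥ M.mulVec xnext = xn ⬝ᵥ M.mulVec xn :=
  symplectic_rk_preserves_quadratic_invariant_general s n f M hM horth h A b hsymp xn Y hY xnext hx
end
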